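/- Every induced subcomplex of a d-collapsible simplicial complex is d-collapsible. -/

import Mathlib

variable {V : Type*} [Fintype V] [DecidableEq V]

open Finset


/-- `W` dominates the set `A` in `G`: every vertex of `A` is in `W` or adjacent to a vertex of `W`. -/
def Dominates (G : SimpleGraph V) (W A : Finset V) : Prop :=
  ∀ a ∈ A, a ∈ W ∨ ∃ w ∈ W, G.Adj w a

/-- `I` is an independent set of `G`. -/
def IndepSet (G : SimpleGraph V) (I : Finset V) : Prop :=
  ∀ u ∈ I, ∀ v ∈ I, ¬ G.Adj u v

instance (G : SimpleGraph V) [DecidableRel G.Adj] (I : Finset V) :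
    Decidable (IndepSet G I) := by unfold IndepSet; infer_instance

/-- The domination number of `G`. -/
noncomputable def gamma (G : SimpleGraph V) : ℕ :=
  sInf {k | ∃ W : Finset V, W.card = k ∧ Dominates G W Finset.univ}

/-- The independence domination number of `G`. -/
noncomputable def igamma (G : SimpleGraph V) : ℕ :=
  sInf {k | ∀ I : Finset V, IndepSet G I → ∃ W : Finset V, W.card ≤ k ∧ Dominates G W I}

/-- The noncover complex of `G`: faces are the vertex sets whose complement is not independent. -/
def NC (G : SimpleGraph V) [DecidableRel G.Adj] : Finset (Finset V) :=
  Finset.univ.filter fun W => ¬ IndepSet G Wᶜ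

/-- The independence complex of `G`. -/
def IndComplex (G : SimpleGraph V) [DecidableRel G.Adj] : Finset (Finset V) :=
  Finset.univ.filter fun I => IndepSet G I

/-- The combinatorial Alexander dual of a complex on the full vertex set `V`. -/
def AlexDual (K : Finset (Finset V)) : Finset (Finset V) :=
  Finset.univ.filter fun s => sᶜ ∉ K

/-- `K` is a simplicial complex (downward closed family of finite sets). -/
def IsComplex (K : Finset (Finset V)) : Prop :=
  ∀ σ ∈ K, ∀ τ ⊆ σ, τ ∈ K

/-- `s` is a maximal face (facet) of `K`. -/
def IsMaxFace (K : Finset (Finset V)) (s : Finset V) : Prop :=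
  s ∈ K ∧ ∀ t ∈ K, s ⊆ t → t = s

/-- `σ` is a free face of `K`: a face contained in a unique maximal face. -/
def IsFreeFace (K : Finset (Finset V)) (σ : Finset V) : Prop :=
  σ ∈ K ∧ ∃ τ ∈ K, σ ⊆ τ ∧ ∀ ρ ∈ K, σ ⊆ ρ → ρ ⊆ τ

/-- `K'` is obtained from `K` by an elementary `d`-collapse. -/
def ElemCollapse (d : ℕ) (K K' : Finset (Finset V)) : Prop :=
  ∃ σ : Finset V, IsFreeFace K σ ∧ σ.card ≤ d ∧ K' = K.filter fun ρ => ¬ σ ⊆ ρ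

/-- `K` is `d`-collapsible. -/
def Collapsible (d : ℕ) (K : Finset (Finset V)) : Prop :=
  Relation.ReflTransGen (ElemCollapse d) K ∅

/-- chordality -/
def IsChordal (G : SimpleGraph V) : Prop :=
  ∀ (u : V) (c : G.Walk u u), c.IsCycle → 4 ≤ c.length →
    ∃ x ∈ c.support, ∃ y ∈ c.support, G.Adj x y ∧ s(x, y) ∉ c.edges

/-- simplicial vertex -/
def IsSimplicialVtx (G : SimpleGraph V) (v : V) : Prop :=
  ∀ x y : V, G.Adj v x → G.Adj v y → x ≠ y → G.Adj x y

/-! A collapse of `K` at a free face `σ ⊆ U` restricts to a collapse of `K[U]` at `σ`, whose unique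
facet in `K[U]` is `τ ∩ U` for the facet `τ` of `σ` in `K` (downward closure puts `τ ∩ U` in `K`);
a collapse at `σ ⊄ U` removes no face of `K[U]`. So every collapse sequence of `K` restricts to
one of `K[U]`. -/

section Restriction

omit [Fintype V]

variable {K K' L : Finset (Finset V)} {σ U : Finset V} {d : ℕ}

theorem IsComplex.of_elemCollapse (hK : IsComplex K) (h : ElemCollapse d K K') : IsComplex K' := by
  obtain ⟨σ, -, -, rfl⟩ := h
  intro ρ hρ π hπρ
  rw [mem_filter] at hρ ⊢
  exact ⟨hK ρ hρ.1 π hπρ, fun hσπ => hρ.2 (hσπ.trans hπρ)⟩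

theorem IsComplex.of_reflTransGen (hK : IsComplex K)
    (h : Relation.ReflTransGen (ElemCollapse d) K L) : IsComplex L := by
  induction h with
  | refl => exact hK
  | tail _ hstep ih => exact ih.of_elemCollapse hstep

theorem IsFreeFace.filter_subset (hK : IsComplex K) (hσ : IsFreeFace K σ) (hσU : σ ⊆ U) :
    IsFreeFace (K.filter (· ⊆ U)) σ := by
  obtain ⟨hσK, τ, hτK, hστ, hτ⟩ := hσ
  refine ⟨mem_filter.2 ⟨hσK, hσU⟩, τ ∩ U,
    mem_filter.2 ⟨hK τ hτK _ inter_subset_left, inter_subset_right⟩, subset_inter hστ hσU,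
    fun ρ hρ hσρ => ?_⟩
  rw [mem_filter] at hρ
  exact subset_inter (hτ ρ hρ.1 hσρ) hρ.2

theorem ElemCollapse.filter_subset (hK : IsComplex K) (h : ElemCollapse d K K') :
    Relation.ReflGen (ElemCollapse d) (K.filter (· ⊆ U)) (K'.filter (· ⊆ U)) := by
  obtain ⟨σ, hσ, hcard, rfl⟩ := h
  by_cases hσU : σ ⊆ U
  · exact .single ⟨σ, hσ.filter_subset hK hσU, hcard, filter_comm _ _ K⟩
  · have hunchanged : ((K.filter fun ρ => ¬ σ ⊆ ρ).filter (· ⊆ U)) = K.filter (· ⊆ U) := by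
      rw [filter_filter]
      exact filter_congr fun ρ _ => and_iff_right_of_imp fun hρU hσρ => hσU (hσρ.trans hρU)
    rw [hunchanged]

theorem reflTransGen_elemCollapse_filter_subset (hK : IsComplex K)
    (h : Relation.ReflTransGen (ElemCollapse d) K L) :
    Relation.ReflTransGen (ElemCollapse d) (K.filter (· ⊆ U)) (L.filter (· ⊆ U)) := by
  induction h with
  | refl => exact .refl
  | tail hKL hstep ih =>
    exact ih.trans ((hstep.filter_subset (hK.of_reflTransGen hKL)).to_reflTransGen)

end Restriction

theorem induced_subcomplex_collapsible (K : Finset (Finset V)) (hK : IsComplex K) (d : ℕ)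
    (hcol : Collapsible d K) (U : Finset V) :
    Collapsible d (K.filter fun s => s ⊆ U) := by
  simpa only [Collapsible, filter_empty] using
    reflTransGen_elemCollapse_filter_subset (U := U) hK hcol
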